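/- arXiv:2207.07772 — 4 statements merged into one kernel-verified Lean document; each statement's English description precedes it below -/
import Mathlib

section
/- Suppose λI − T(x) is nonsingular, eᵀx = 1, and w = (λI − T(x))^{-1} x satisfies eᵀw ≠ 0. Then the Newton update (x̂, λ̂) defined by solving [[λI − T(x), x],[eᵀ, 0]]·(d, δ) = (λx − A x^{m-1}, 0) with x̂ = x − d, λ̂ = λ − δ, satisfies x̂ = (1/(m−1))·((m−2)x + w/(eᵀw)) and λ̂ = (1/(m−1))·(λ − 1/(eᵀw)). -/
open Matrix

noncomputable def tmul (p n : ℕ) (A : Fin n → (Fin p → Fin n) → ℝ) (x : Fin n → ℝ) :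
    Fin n → ℝ :=
  fun i => ∑ j : Fin p → Fin n, A i j * ∏ k, x (j k)

/-- The Jacobian matrix of `x ↦ A x^{m-1}`. -/
noncomputable def jac (p n : ℕ) (A : Fin n → (Fin p → Fin n) → ℝ) (x : Fin n → ℝ) :
    Matrix (Fin n) (Fin n) ℝ :=
  fun i j => fderiv ℝ (fun y => tmul p n A y i) x (Pi.single j 1)

lemma tmul_smul (p n : ℕ) (A : Fin n → (Fin p → Fin n) → ℝ) (x : Fin n → ℝ) (t : ℝ)
    (i : Fin n) : tmul p n A (t • x) i = t ^ p * tmul p n A x i := by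
  simp only [tmul, Finset.mul_sum]
  refine Finset.sum_congr rfl fun j _ => ?_
  simp only [Pi.smul_apply, smul_eq_mul, Finset.prod_mul_distrib, Finset.prod_const,
    Finset.card_univ, Fintype.card_fin]
  ring

lemma tmul_diffAt (p n : ℕ) (A : Fin n → (Fin p → Fin n) → ℝ) (x : Fin n → ℝ) (i : Fin n) :
    DifferentiableAt ℝ (fun y => tmul p n A y i) x := by
  simp only [tmul]
  apply DifferentiableAt.fun_sum
  intro j _
  have h : DifferentiableAt ℝ (fun y : Fin n → ℝ => ∏ k, y (j k)) x := by
    have := HasFDerivAt.finset_prod (u := Finset.univ) (x := x)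
      (g := fun (k : Fin p) (y : Fin n → ℝ) => y (j k))
      (g' := fun k => (ContinuousLinearMap.proj (j k) : (Fin n → ℝ) →L[ℝ] ℝ))
      (fun k _ => (ContinuousLinearMap.proj (j k) : (Fin n → ℝ) →L[ℝ] ℝ).hasFDerivAt)
    exact this.differentiableAt
  exact h.const_mul _

lemma fderiv_self (p n : ℕ) (A : Fin n → (Fin p → Fin n) → ℝ) (x : Fin n → ℝ) (i : Fin n) :
    fderiv ℝ (fun y => tmul p n A y i) x x = (p : ℝ) * tmul p n A x i := by
  have hdiff := tmul_diffAt p n A x i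
  have hs : HasDerivAt (fun t : ℝ => t • x) x 1 := by
    simpa using (hasDerivAt_id (1 : ℝ)).smul_const x
  have h1 : HasDerivAt (fun t : ℝ => tmul p n A (t • x) i)
      (fderiv ℝ (fun y => tmul p n A y i) x x) 1 := by
    have hF : HasFDerivAt (fun y => tmul p n A y i) (fderiv ℝ (fun y => tmul p n A y i) x)
        ((fun t : ℝ => t • x) 1) := by simpa using hdiff.hasFDerivAt
    exact hF.comp_hasDerivAt 1 hs
  have h2 : HasDerivAt (fun t : ℝ => tmul p n A (t • x) i) ((p : ℝ) * tmul p n A x i) 1 := by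
    have : HasDerivAt (fun t : ℝ => t ^ p * tmul p n A x i)
        ((p : ℝ) * 1 ^ (p - 1) * tmul p n A x i) 1 := (hasDerivAt_pow p 1).mul_const _
    simp only [one_pow, mul_one] at this
    simpa only [tmul_smul] using this
  exact h1.unique h2

lemma euler (p n : ℕ) (A : Fin n → (Fin p → Fin n) → ℝ) (x : Fin n → ℝ) :
    jac p n A x *ᵥ x = (p : ℝ) • tmul p n A x := by
  funext i
  have hx : ∑ j, x j • (Pi.single j 1 : Fin n → ℝ) = x := by
    simp_rw [← Pi.single_smul, smul_eq_mul, mul_one]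
    exact Finset.univ_sum_single x
  calc (jac p n A x *ᵥ x) i
      = ∑ j, (fderiv ℝ (fun y => tmul p n A y i) x) (x j • (Pi.single j 1 : Fin n → ℝ)) := by
        simp [Matrix.mulVec, dotProduct, jac, mul_comm]
    _ = (fderiv ℝ (fun y => tmul p n A y i) x) (∑ j, x j • (Pi.single j 1 : Fin n → ℝ)) := by
        rw [map_sum]
    _ = (p : ℝ) * tmul p n A x i := by rw [hx, fderiv_self]

/-- Explicit form of the Newton update:
`x̂ = ((m−2)x + w/(eᵀw))/(m−1)`, `λ̂ = (λ − 1/(eᵀw))/(m−1)`. -/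
theorem stmt_5 (m n : ℕ) (hm : 2 ≤ m) (A : Fin n → (Fin (m - 1) → Fin n) → ℝ)
    (lam : ℝ) (x : Fin n → ℝ) (hx : ∑ i, x i = 1)
    (hT : (lam • (1 : Matrix (Fin n) (Fin n) ℝ) - jac (m - 1) n A x).det ≠ 0)
    (w : Fin n → ℝ)
    (hw : w = (lam • (1 : Matrix (Fin n) (Fin n) ℝ) - jac (m - 1) n A x)⁻¹ *ᵥ x)
    (hew : ∑ i, w i ≠ 0)
    (d : Fin n → ℝ) (δ : ℝ)
    (hrow1 : (lam • (1 : Matrix (Fin n) (Fin n) ℝ) - jac (m - 1) n A x) *ᵥ d + δ • x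
        = lam • x - tmul (m - 1) n A x)
    (hrow2 : ∑ i, d i = 0) :
    x - d = ((m : ℝ) - 1)⁻¹ • (((m : ℝ) - 2) • x + (∑ i, w i)⁻¹ • w) ∧
      lam - δ = ((m : ℝ) - 1)⁻¹ * (lam - (∑ i, w i)⁻¹) := by
  set M : Matrix (Fin n) (Fin n) ℝ := lam • (1 : Matrix (Fin n) (Fin n) ℝ) - jac (m - 1) n A x
    with hMdef
  set F : Fin n → ℝ := tmul (m - 1) n A x with hFdef
  set S : ℝ := ∑ i, w i with hSdef
  have hM : IsUnit M.det := isUnit_iff_ne_zero.mpr hT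
  have hm1 : ((m : ℝ) - 1) ≠ 0 := by
    have : (2 : ℝ) ≤ (m : ℝ) := by exact_mod_cast hm
    linarith
  -- M w = x
  have hMw : M *ᵥ w = x := by
    rw [hw, Matrix.mulVec_mulVec, Matrix.mul_nonsing_inv _ hM, Matrix.one_mulVec]
  -- Euler
  have hcast : ((m - 1 : ℕ) : ℝ) = (m : ℝ) - 1 := by
    rw [Nat.cast_sub (by omega)]; simp
  have hEuler : jac (m - 1) n A x *ᵥ x = ((m : ℝ) - 1) • F := by
    rw [hFdef, ← hcast]; exact euler (m - 1) n A x
  have hMx : M *ᵥ x = lam • x - ((m : ℝ) - 1) • F := by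
    rw [hMdef, Matrix.sub_mulVec, hEuler, Matrix.smul_mulVec, Matrix.one_mulVec]
  -- the key identity for d
  set c : ℝ := lam - δ - lam * ((m : ℝ) - 1)⁻¹ with hcdef
  have hMd : M *ᵥ d = M *ᵥ (c • w + ((m : ℝ) - 1)⁻¹ • x) := by
    rw [Matrix.mulVec_add, Matrix.mulVec_smul, Matrix.mulVec_smul, hMw, hMx]
    have h1 : M *ᵥ d = lam • x - F - δ • x := by
      rw [← hrow1]; abel
    rw [h1, hcdef]
    match_scalars <;> field_simp <;> ring
  have hd : d = c • w + ((m : ℝ) - 1)⁻¹ • x := by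
    have := congrArg (fun v => M⁻¹ *ᵥ v) hMd
    simpa [Matrix.mulVec_mulVec, Matrix.nonsing_inv_mul _ hM, Matrix.one_mulVec] using this
  -- sum of d
  have hsum : c * S + ((m : ℝ) - 1)⁻¹ = 0 := by
    have : ∑ i, d i = c * S + ((m : ℝ) - 1)⁻¹ * (∑ i, x i) := by
      rw [hd, hSdef]
      simp [Finset.sum_add_distrib, Finset.mul_sum]
    rw [hrow2, hx, mul_one] at this
    linarith
  have hc : c = -(((m : ℝ) - 1)⁻¹ * S⁻¹) := by
    field_simp at hsum ⊢
    linear_combination hsum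
  constructor
  · rw [hd, hc]
    match_scalars <;> field_simp <;> ring
  · have h2 : lam - δ = -(((m : ℝ) - 1)⁻¹ * S⁻¹) + lam * ((m : ℝ) - 1)⁻¹ := by
      rw [← hc, hcdef]; ring
    rw [h2]; ring
end

section
/- Let x, y ∈ ℝⁿ with y ≥ 0, ‖y‖₁ = 1, eᵀx = 1, and suppose x has at least one positive component. Define proj(x) = max(x, 0)/‖max(x, 0)‖₁ (componentwise maximum with the zero vector). Then ‖proj(x) − y‖₁ ≤ ‖x − y‖₁. -/
/-- ℓ¹ norm on ℝⁿ. -/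
noncomputable def l1 {n : ℕ} (x : Fin n → ℝ) : ℝ := ∑ i, |x i|

/-- The ℓ¹-projection `proj(x) = max(x,0)/‖max(x,0)‖₁` onto the simplex does not
increase the ℓ¹-distance to points `y ≥ 0` with `‖y‖₁ = 1`. -/
theorem stmt_7 (n : ℕ) (x y : Fin n → ℝ)
    (hy0 : ∀ i, 0 ≤ y i) (hy1 : l1 y = 1)
    (hx : ∑ i, x i = 1) (hxpos : ∃ i, 0 < x i) :
    l1 ((l1 (fun i => max (x i) 0))⁻¹ • (fun i => max (x i) 0) - y) ≤ l1 (x - y) := by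
  set s : ℝ := ∑ i, max (x i) 0 with hsdef
  have hs1 : (1:ℝ) ≤ s := by
    rw [← hx]; exact Finset.sum_le_sum (fun i _ => le_max_left _ _)
  have hs0 : (0:ℝ) < s := lt_of_lt_of_le one_pos hs1
  have hsne : s ≠ 0 := ne_of_gt hs0
  have hl1p : l1 (fun i => max (x i) 0) = s := by
    unfold l1
    exact Finset.sum_congr rfl (fun i _ => abs_of_nonneg (le_max_right _ _))
  rw [hl1p]
  unfold l1
  simp only [Pi.sub_apply, Pi.smul_apply, smul_eq_mul]
  have key : ∀ i ∈ Finset.univ, |s⁻¹ * max (x i) 0 - y i|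
      ≤ |x i - y i| + (max (x i) 0 * (s - 1) / s - (max (x i) 0 - x i)) := by
    intro i _
    rcases le_or_gt 0 (x i) with h | h
    · rw [max_eq_left h]
      have habs : |s⁻¹ * x i - x i| = x i * (s - 1) / s := by
        rw [abs_of_nonpos]
        · field_simp
          ring
        · have : s⁻¹ * x i ≤ 1 * x i := by
            apply mul_le_mul_of_nonneg_right _ h
            rw [inv_le_one_iff₀]; right; exact hs1
          linarith [this]
      calc |s⁻¹ * x i - y i| ≤ |s⁻¹ * x i - x i| + |x i - y i| := abs_sub_le _ _ _
        _ = |x i - y i| + (x i * (s - 1) / s - (x i - x i)) := by rw [habs]; ring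
    · rw [max_eq_right (le_of_lt h)]
      have : |s⁻¹ * 0 - y i| = y i := by
        rw [mul_zero, zero_sub, abs_neg, abs_of_nonneg (hy0 i)]
      rw [this]
      have : |x i - y i| = y i - x i := by
        rw [abs_of_nonpos (by linarith [hy0 i])]; ring
      rw [this]
      have : (0:ℝ) * (s - 1) / s = 0 := by ring
      rw [this]
      linarith
  calc ∑ i, |s⁻¹ * max (x i) 0 - y i|
      ≤ ∑ i, (|x i - y i| + (max (x i) 0 * (s - 1) / s - (max (x i) 0 - x i))) :=
        Finset.sum_le_sum key
    _ = ∑ i, |x i - y i| := by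
        rw [Finset.sum_add_distrib]
        have h1 : ∑ i, (max (x i) 0 * (s - 1) / s - (max (x i) 0 - x i))
            = s * (s - 1) / s - (s - 1) := by
          rw [Finset.sum_sub_distrib, Finset.sum_sub_distrib, ← hsdef, hx]
          congr 1
          rw [← Finset.sum_div, ← Finset.sum_mul, ← hsdef]
        rw [h1]
        field_simp
        ring
end

section
/- Let T be an n×n real matrix and x ∈ ℝⁿ with eᵀx = 1. The function p(λ) = det [[λI − T, x],[eᵀ, 0]] is a polynomial in λ of degree exactly n−1 with leading coefficient −1. -/
open Matrix Polynomial

lemma detBlock_field {K : Type*} [Field K] {n : Type*} [Fintype n] [DecidableEq n]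
    (A : Matrix n n K) (hA : A.det ≠ 0) (u v : n → K) :
    (fromBlocks A (replicateCol (Fin 1) u) (replicateRow (Fin 1) v) (0 : Matrix (Fin 1) (Fin 1) K)).det
      = -(v ⬝ᵥ A.adjugate *ᵥ u) := by
  have : Invertible A := A.invertibleOfIsUnitDet (isUnit_iff_ne_zero.2 hA)
  rw [det_fromBlocks₁₁, invOf_eq_nonsing_inv]
  have h1 : ((0 : Matrix (Fin 1) (Fin 1) K) - replicateRow (Fin 1) v * A⁻¹ * replicateCol (Fin 1) u).det
      = -(v ⬝ᵥ A⁻¹ *ᵥ u) := by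
    rw [det_fin_one]
    simp [Matrix.mul_assoc, Matrix.replicateRow_mul_replicateCol_apply, mulVec, dotProduct, Finset.mul_sum,
      mul_assoc, Matrix.mul_apply]
  rw [h1, Matrix.inv_def, Ring.inverse_eq_inv]
  have h2 : v ⬝ᵥ (A.det⁻¹ • A.adjugate) *ᵥ u = A.det⁻¹ * (v ⬝ᵥ A.adjugate *ᵥ u) := by
    rw [smul_mulVec, dotProduct_smul, smul_eq_mul]
  rw [h2]
  field_simp

lemma detBlock_poly {n : Type*} [Fintype n] [DecidableEq n]
    (A : Matrix n n ℝ[X]) (hA : A.det ≠ 0) (u v : n → ℝ[X]) :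
    (fromBlocks A (replicateCol (Fin 1) u) (replicateRow (Fin 1) v) (0 : Matrix (Fin 1) (Fin 1) ℝ[X])).det
      = -(v ⬝ᵥ A.adjugate *ᵥ u) := by
  set K := RatFunc ℝ
  set φ : ℝ[X] →+* K := (algebraMap ℝ[X] K : ℝ[X] →+* K)
  have hφ : Function.Injective φ := IsFractionRing.injective ℝ[X] K
  apply hφ
  have hdot : ∀ (w z : n → ℝ[X]) (M : Matrix n n ℝ[X]),
      φ (w ⬝ᵥ M *ᵥ z) = (φ ∘ w) ⬝ᵥ (M.map φ) *ᵥ (φ ∘ z) := by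
    intro w z M
    simp [dotProduct, mulVec, map_sum, _root_.map_mul, Matrix.map_apply, Finset.mul_sum]
  rw [map_neg, hdot, RingHom.map_det]
  have hmap : (φ.mapMatrix (fromBlocks A (replicateCol (Fin 1) u) (replicateRow (Fin 1) v) 0))
      = fromBlocks (A.map φ) (replicateCol (Fin 1) (φ ∘ u)) (replicateRow (Fin 1) (φ ∘ v)) 0 := by
    ext i j
    cases i <;> cases j <;> simp [fromBlocks, Matrix.map_apply]
  rw [hmap, detBlock_field _ ?hne]
  · congr 1
    have := φ.map_adjugate A
    rw [RingHom.mapMatrix_apply, RingHom.mapMatrix_apply] at this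
    rw [this]
  case hne =>
    have : (A.map ⇑φ).det = φ A.det := by
      rw [RingHom.map_det, RingHom.mapMatrix_apply]
    rw [this]
    intro h
    exact hA (hφ (by simpa using h))

-- minor of charmatrix
lemma charmatrix_submatrix_inj {n m : Type*} [Fintype n] [DecidableEq n] [Fintype m] [DecidableEq m]
    (T : Matrix n n ℝ) (f : m → n) (hf : Function.Injective f) :
    (charmatrix T).submatrix f f = charmatrix (T.submatrix f f) := by
  ext i j
  simp [charmatrix_apply, Matrix.diagonal_apply, hf.eq_iff, Matrix.submatrix_apply]

lemma rj_eq {m : ℕ} (T : Matrix (Fin (m+1)) (Fin (m+1)) ℝ) (j : Fin (m+1)) :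
    ((charmatrix T).updateRow j (Pi.single j 1)).det
      = (T.submatrix j.succAbove j.succAbove).charpoly := by
  have h := Matrix.adjugate_fin_succ_eq_det_submatrix (charmatrix T) j j
  rw [Matrix.adjugate_apply] at h
  rw [h, charmatrix_submatrix_inj T _ (Fin.succAbove_right_injective), Matrix.charpoly]
  have : ((-1 : ℝ[X])) ^ ((j : ℕ) + (j : ℕ)) = 1 := Even.neg_one_pow ⟨j, rfl⟩
  rw [this, one_mul]


lemma natDegree_le_of_succ {f : ℝ[X]} {k : ℕ} (h1 : f.natDegree ≤ k + 1)
    (h2 : f.coeff (k+1) = 0) : f.natDegree ≤ k := by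
  rw [Polynomial.natDegree_le_iff_coeff_eq_zero] at h1 ⊢
  intro d hd
  rcases eq_or_lt_of_le (Nat.succ_le_of_lt hd) with h | h
  · rw [← h]; exact h2
  · exact h1 d h

lemma qj_decomp {m : ℕ} (T : Matrix (Fin (m+1)) (Fin (m+1)) ℝ) (j : Fin (m+1)) :
    ((charmatrix T).updateRow j (fun _ => (1:ℝ[X]))).det
      = (T.updateRow j (fun _ => (-1:ℝ))).charpoly
        - X * (T.submatrix j.succAbove j.succAbove).charpoly := by
  have hT' : charmatrix (T.updateRow j (fun _ => (-1:ℝ)))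
      = (charmatrix T).updateRow j
          ((fun _ => (1:ℝ[X])) + (X:ℝ[X]) • (Pi.single j (1:ℝ[X]) : Fin (m+1) → ℝ[X])) := by
    ext i k
    by_cases hij : i = j
    · subst hij
      by_cases hik : i = k <;>
        [skip; skip] <;>
        (first
          | (simp [charmatrix_apply, Matrix.diagonal_apply, Matrix.updateRow_self, hik,
              Pi.single_apply, eq_comm]; try ring)
          | simp [charmatrix_apply, Matrix.diagonal_apply, Matrix.updateRow_self, hik,
              Pi.single_apply, eq_comm])
    · simp [charmatrix_apply, Matrix.updateRow_ne hij]
  rw [Matrix.charpoly, hT', Matrix.det_updateRow_add, Matrix.det_updateRow_smul, rj_eq]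
  ring

lemma qj_bound {m : ℕ} (T : Matrix (Fin (m+2)) (Fin (m+2)) ℝ) (j : Fin (m+2)) :
    ((charmatrix T).updateRow j (fun _ => (1:ℝ[X]))).det.natDegree ≤ m+1 ∧
    ((charmatrix T).updateRow j (fun _ => (1:ℝ[X]))).det.coeff (m+1) = 1 := by
  rw [qj_decomp]
  set P := (T.updateRow j (fun _ => (-1:ℝ))).charpoly with hP
  set Q := (T.submatrix j.succAbove j.succAbove).charpoly with hQ
  have hPm : P.Monic := Matrix.charpoly_monic _
  have hQm : Q.Monic := Matrix.charpoly_monic _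
  have hPd : P.natDegree = m + 2 := by
    rw [hP, Matrix.charpoly_natDegree_eq_dim]; simp
  have hQd : Q.natDegree = m + 1 := by
    rw [hQ, Matrix.charpoly_natDegree_eq_dim]; simp
  have hXQd : (X * Q).natDegree = m + 2 := by
    rw [natDegree_X_mul hQm.ne_zero, hQd]
  have htop : (P - X * Q).coeff (m+2) = 0 := by
    rw [coeff_sub, coeff_X_mul]
    have h1 : P.coeff (m+2) = 1 := by
      have := hPm.coeff_natDegree; rwa [hPd] at this
    have h2 : Q.coeff (m+1) = 1 := by
      have := hQm.coeff_natDegree; rwa [hQd] at this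
    rw [h1, h2]; ring
  have hle : (P - X * Q).natDegree ≤ m + 2 :=
    le_trans (natDegree_sub_le _ _) (by rw [hPd, hXQd]; simp)
  constructor
  · exact natDegree_le_of_succ hle htop
  · rw [coeff_sub, coeff_X_mul]
    have htr : (T.updateRow j (fun _ => (-1:ℝ))).trace
        = -1 + (T.submatrix j.succAbove j.succAbove).trace := by
      rw [Matrix.trace, Matrix.trace]
      rw [Fin.sum_univ_succAbove (fun i => (T.updateRow j (fun _ => (-1:ℝ))).diag i) j]
      simp [Matrix.diag, Matrix.updateRow_self, Matrix.updateRow_ne (Fin.succAbove_ne j _)]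
    have h1 : P.coeff (m+1) = -(T.updateRow j (fun _ => (-1:ℝ))).trace := by
      have := Matrix.trace_eq_neg_charpoly_coeff (T.updateRow j (fun _ => (-1:ℝ)))
      simp only [Fintype.card_fin] at this
      rw [hP, this, neg_neg]
      congr 1
    have h2 : Q.coeff m = -(T.submatrix j.succAbove j.succAbove).trace := by
      have := Matrix.trace_eq_neg_charpoly_coeff (T.submatrix j.succAbove j.succAbove)
      simp only [Fintype.card_fin] at this
      rw [hQ, this, neg_neg]
      congr 1
    rw [h1, h2, htr]; ring

lemma sum_adjugate_col {n : Type*} [Fintype n] [DecidableEq n] {R : Type*} [CommRing R]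
    (A : Matrix n n R) (j : n) :
    ∑ i, A.adjugate i j = (A.updateRow j (fun _ => (1:R))).det := by
  simp only [Matrix.adjugate_apply]
  have : ∀ i : n, (A.updateRow j (Pi.single i (1:R))).det
      = Matrix.detRowAlternating (Function.update A j (Pi.single i (1:R))) := fun _ => rfl
  simp only [this]
  have h2 := MultilinearMap.map_update_sum (Matrix.detRowAlternating).toMultilinearMap
    Finset.univ j (fun i : n => Pi.single i (1:R)) A
  rw [show (∑ i : n, Pi.single i (1:R)) = (fun _ => (1:R)) from
    Finset.univ_sum_single (fun _ => (1:R))] at h2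
  exact (h2.symm : _)

lemma qj_bound' {k : ℕ} (T : Matrix (Fin (k+1)) (Fin (k+1)) ℝ) (j : Fin (k+1)) :
    ((charmatrix T).updateRow j (fun _ => (1:ℝ[X]))).det.natDegree ≤ k ∧
    ((charmatrix T).updateRow j (fun _ => (1:ℝ[X]))).det.coeff k = 1 := by
  match k, T, j with
  | 0, T, j =>
    have : ((charmatrix T).updateRow j (fun _ => (1:ℝ[X]))).det = 1 := by
      rw [Matrix.det_fin_one]
      rw [show (0 : Fin 1) = j from Subsingleton.elim _ _, Matrix.updateRow_self]
    rw [this]; simp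
  | (m+1), T, j => exact qj_bound T j

/-- `p(λ) = det [[λI − T, x],[eᵀ, 0]]` is a polynomial in `λ` of degree exactly `n−1`
with leading coefficient `−1`, when `eᵀx = 1`. -/
theorem stmt_9 (n : ℕ) (T : Matrix (Fin n) (Fin n) ℝ) (x : Fin n → ℝ)
    (hx : ∑ i, x i = 1) :
    (Matrix.fromBlocks
        ((Polynomial.X : ℝ[X]) • (1 : Matrix (Fin n) (Fin n) ℝ[X]) - T.map Polynomial.C)
        (Matrix.replicateCol (Fin 1) (fun i => Polynomial.C (x i)))
        (Matrix.replicateRow (Fin 1) (fun _ => (Polynomial.C (1 : ℝ))))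
        (0 : Matrix (Fin 1) (Fin 1) ℝ[X])).det.natDegree = n - 1 ∧
    (Matrix.fromBlocks
        ((Polynomial.X : ℝ[X]) • (1 : Matrix (Fin n) (Fin n) ℝ[X]) - T.map Polynomial.C)
        (Matrix.replicateCol (Fin 1) (fun i => Polynomial.C (x i)))
        (Matrix.replicateRow (Fin 1) (fun _ => (Polynomial.C (1 : ℝ))))
        (0 : Matrix (Fin 1) (Fin 1) ℝ[X])).det.leadingCoeff = -1 := by
  rcases n with _ | k
  · exfalso; simpa using hx
  have hchar : ((X : ℝ[X]) • (1 : Matrix (Fin (k+1)) (Fin (k+1)) ℝ[X]) - T.map C)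
      = charmatrix T := by
    ext i j
    by_cases h : i = j <;>
      simp [charmatrix_apply, Matrix.diagonal_apply, h, Matrix.one_apply]
  have hdet : (charmatrix T).det ≠ 0 := by
    have h0 : (charmatrix T).det = T.charpoly := rfl
    rw [h0]; exact (Matrix.charpoly_monic T).ne_zero
  have key : (Matrix.fromBlocks (charmatrix T)
        (Matrix.replicateCol (Fin 1) (fun i => C (x i)))
        (Matrix.replicateRow (Fin 1) (fun _ => C (1:ℝ)))
        (0 : Matrix (Fin 1) (Fin 1) ℝ[X])).det
      = -∑ j, ((charmatrix T).updateRow j (fun _ => (1:ℝ[X]))).det * C (x j) := by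
    rw [detBlock_poly _ hdet]
    congr 1
    calc (fun _ => C (1:ℝ)) ⬝ᵥ (charmatrix T).adjugate *ᵥ (fun i => C (x i))
        = ∑ i, ∑ j, (charmatrix T).adjugate i j * C (x j) := by
          simp [dotProduct, mulVec]
      _ = ∑ j, (∑ i, (charmatrix T).adjugate i j) * C (x j) := by
          rw [Finset.sum_comm]
          simp [Finset.sum_mul]
      _ = ∑ j, ((charmatrix T).updateRow j fun _ => (1:ℝ[X])).det * C (x j) := by
          simp [sum_adjugate_col]
  rw [hchar, key]
  have hdeg : (∑ j, ((charmatrix T).updateRow j (fun _ => (1:ℝ[X]))).det * C (x j)).natDegree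
      ≤ k := by
    refine natDegree_sum_le_of_forall_le _ _ (fun j _ => ?_)
    refine le_trans (natDegree_mul_le) ?_
    simp [natDegree_C, (qj_bound' T j).1]
  have hcoeff : (-∑ j, ((charmatrix T).updateRow j (fun _ => (1:ℝ[X]))).det * C (x j)).coeff k
      = -1 := by
    rw [coeff_neg, finset_sum_coeff]
    simp only [coeff_mul_C]
    simp only [fun j : Fin (k+1) => (qj_bound' T j).2, one_mul]
    rw [hx]
  have hnd : (-∑ j, ((charmatrix T).updateRow j (fun _ => (1:ℝ[X]))).det * C (x j)).natDegree
      = k := by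
    refine le_antisymm ?_ (le_natDegree_of_ne_zero (by rw [hcoeff]; norm_num))
    rw [natDegree_neg]; exact hdeg
  refine ⟨by rw [hnd]; omega, ?_⟩
  rw [Polynomial.leadingCoeff, hnd, hcoeff]
end

section
/- Let f : ℝ^{n+1} → ℝ^{n+1} be defined by f(x, λ) = (λx − A x^{m-1}, eᵀx − 1), and let (x*, λ*) be a zero of f with Jf(x*, λ*) nonsingular and λ* ≥ 0, x* ≥ 0. Then there exist δ > 0 and c > 0 such that for any (x, λ) with ‖(x,λ) − (x*,λ*)‖₁ < δ, eᵀx = 1, and x having a positive component, the one-step modified projected Newton update (x⁺, λ⁺) — obtained by taking a Newton step (x̂, λ̂) = (x, λ) − Jf(x,λ)^{-1} f(x,λ), then setting x⁺ = max(x̂,0)/‖max(x̂,0)‖₁ and λ⁺ = max(λ̂, 0) — satisfies ‖(x⁺, λ⁺) − (x*, λ*)‖₁ ≤ c·‖(x, λ) − (x*, λ*)‖₁². -/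
open Matrix

/-- The bordered Jacobian `Jf(x,λ) = [[λI − T(x), x],[eᵀ, 0]]`. -/
noncomputable def Jf (p n : ℕ) (A : Fin n → (Fin p → Fin n) → ℝ) (x : Fin n → ℝ)
    (lam : ℝ) : Matrix (Fin n ⊕ Fin 1) (Fin n ⊕ Fin 1) ℝ :=
  Matrix.fromBlocks (lam • (1 : Matrix (Fin n) (Fin n) ℝ) - jac p n A x)
    (Matrix.replicateCol (Fin 1) x) (Matrix.replicateRow (Fin 1) (fun _ => (1 : ℝ)))
    (0 : Matrix (Fin 1) (Fin 1) ℝ)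

/-- The value `f(x,λ) = (λx − A x^{m-1}, eᵀx − 1)` as a vector indexed by `Fin n ⊕ Fin 1`. -/
noncomputable def fval (p n : ℕ) (A : Fin n → (Fin p → Fin n) → ℝ) (x : Fin n → ℝ)
    (lam : ℝ) : Fin n ⊕ Fin 1 → ℝ :=
  Sum.elim (lam • x - tmul p n A x) (fun _ => (∑ i, x i) - 1)

namespace Stmt14Aux

variable (p n : ℕ) (A : Fin n → (Fin p → Fin n) → ℝ)

/-- restriction to the first block of coordinates, as a CLM -/
noncomputable def res : ((Fin n ⊕ Fin 1) → ℝ) →L[ℝ] (Fin n → ℝ) :=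
  ContinuousLinearMap.pi fun i => ContinuousLinearMap.proj (Sum.inl i)

@[simp] lemma res_apply (z : (Fin n ⊕ Fin 1) → ℝ) (i : Fin n) :
    res n z i = z (Sum.inl i) := rfl

noncomputable def prj (n : ℕ) (b : Fin n ⊕ Fin 1) : ((Fin n ⊕ Fin 1) → ℝ) →L[ℝ] ℝ :=
  ContinuousLinearMap.proj b

@[simp] lemma prj_apply (b : Fin n ⊕ Fin 1) (v : (Fin n ⊕ Fin 1) → ℝ) :
    prj n b v = v b := rfl

noncomputable def G : ((Fin n ⊕ Fin 1) → ℝ) → ((Fin n ⊕ Fin 1) → ℝ) :=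
  fun z => fval p n A (res n z) (z (Sum.inr 0))

noncomputable def Mz (z : (Fin n ⊕ Fin 1) → ℝ) :
    Matrix (Fin n ⊕ Fin 1) (Fin n ⊕ Fin 1) ℝ :=
  Jf p n A (res n z) (z (Sum.inr 0))

lemma contDiff_tmul (i : Fin n) :
    ContDiff ℝ ⊤ (fun y : Fin n → ℝ => tmul p n A y i) := by
  unfold tmul
  exact ContDiff.sum fun j _ =>
    contDiff_const.mul (contDiff_prod fun k _ => contDiff_apply ℝ ℝ (j k))

lemma G_apply_inl (z : (Fin n ⊕ Fin 1) → ℝ) (i : Fin n) :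
    G p n A z (Sum.inl i) =
      z (Sum.inr 0) * z (Sum.inl i) - tmul p n A (res n z) i := by
  simp [G, fval]

lemma G_apply_inr (z : (Fin n ⊕ Fin 1) → ℝ) (t : Fin 1) :
    G p n A z (Sum.inr t) = (∑ i, z (Sum.inl i)) - 1 := by
  simp [G, fval]

lemma contDiff_G : ContDiff ℝ ⊤ (G p n A) := by
  rw [contDiff_pi]
  rintro (i | t)
  · have heq : (fun z : (Fin n ⊕ Fin 1) → ℝ => G p n A z (Sum.inl i)) =
        fun z => z (Sum.inr 0) * z (Sum.inl i) - tmul p n A (res n z) i :=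
      funext fun z => G_apply_inl p n A z i
    rw [heq]
    exact ((contDiff_apply ℝ ℝ (Sum.inr 0)).mul (contDiff_apply ℝ ℝ (Sum.inl i))).sub
      ((contDiff_tmul p n A i).comp (res n).contDiff)
  · have heq : (fun z : (Fin n ⊕ Fin 1) → ℝ => G p n A z (Sum.inr t)) =
        fun z => (∑ i, z (Sum.inl i)) - 1 :=
      funext fun z => G_apply_inr p n A z t
    rw [heq]
    exact (ContDiff.sum fun i _ => contDiff_apply ℝ ℝ (Sum.inl i)).sub contDiff_const

lemma res_single_inl (j : Fin n) :
    res n (Pi.single (Sum.inl j) (1 : ℝ)) = Pi.single j 1 := by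
  funext i
  simp [Pi.single_apply, Sum.inl.injEq]

lemma res_single_inr (t : Fin 1) :
    res n (Pi.single (Sum.inr t) (1 : ℝ)) = 0 := by
  funext i
  simp [Pi.single_apply]

lemma clm_ext {f g : ((Fin n ⊕ Fin 1) → ℝ) →L[ℝ] ℝ}
    (h : ∀ b, f (Pi.single b 1) = g (Pi.single b 1)) : f = g := by
  ext v
  have hf := f.toLinearMap.pi_apply_eq_sum_univ v
  have hg := g.toLinearMap.pi_apply_eq_sum_univ v
  simp only [ContinuousLinearMap.coe_coe] at hf hg
  rw [hf, hg]
  refine Finset.sum_congr rfl fun b _ => ?_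
  have hb : (fun j => if b = j then (1 : ℝ) else 0) = Pi.single b 1 := by
    funext j; simp [Pi.single_apply, eq_comm]
  rw [hb, h b]

noncomputable def L (z : (Fin n ⊕ Fin 1) → ℝ) :
    ((Fin n ⊕ Fin 1) → ℝ) →L[ℝ] ((Fin n ⊕ Fin 1) → ℝ) :=
  LinearMap.toContinuousLinearMap (Matrix.mulVecLin (Mz p n A z))

@[simp] lemma L_apply (z v : (Fin n ⊕ Fin 1) → ℝ) :
    L p n A z v = Mz p n A z *ᵥ v := rfl

lemma hasFDerivAt_G (z : (Fin n ⊕ Fin 1) → ℝ) :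
    HasFDerivAt (G p n A) (L p n A z) z := by
  apply hasFDerivAt_pi''
  rintro (i | t)
  · have heq : (fun z : (Fin n ⊕ Fin 1) → ℝ => G p n A z (Sum.inl i)) =
        fun z => z (Sum.inr 0) * z (Sum.inl i) - tmul p n A (res n z) i :=
      funext fun z => G_apply_inl p n A z i
    rw [heq]
    have h1 : HasFDerivAt (fun z : (Fin n ⊕ Fin 1) → ℝ => z (Sum.inr 0))
        (prj n (Sum.inr 0)) z :=
      (prj n (Sum.inr 0)).hasFDerivAt
    have h2 : HasFDerivAt (fun z : (Fin n ⊕ Fin 1) → ℝ => z (Sum.inl i))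
        (prj n (Sum.inl i)) z :=
      (prj n (Sum.inl i)).hasFDerivAt
    have h3 : HasFDerivAt (fun y : Fin n → ℝ => tmul p n A y i)
        (fderiv ℝ (fun y => tmul p n A y i) (res n z)) (res n z) :=
      (((contDiff_tmul p n A i).differentiable (by simp)) _).hasFDerivAt
    have hder := (h1.mul h2).sub (h3.comp z (res n).hasFDerivAt)
    have hCLM : (z (Sum.inr 0) • prj n (Sum.inl i) +
          z (Sum.inl i) • prj n (Sum.inr 0) -
          (fderiv ℝ (fun y => tmul p n A y i) (res n z)).comp (res n)) =
        (prj n (Sum.inl i)).comp (L p n A z) := by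
      apply clm_ext
      rintro (j | t)
      · have := res_single_inl n j
        simp only [ContinuousLinearMap.sub_apply, ContinuousLinearMap.add_apply,
          ContinuousLinearMap.smul_apply, prj_apply,
          ContinuousLinearMap.comp_apply, L_apply, this]
        have hm : (Mz p n A z *ᵥ Pi.single (Sum.inl j) 1) (Sum.inl i) =
            Mz p n A z (Sum.inl i) (Sum.inl j) := by
          rw [Matrix.mulVec_single]; exact mul_one _
        rw [hm]
        have hj : fderiv ℝ (fun y => tmul p n A y i) (res n z) (Pi.single j 1) =
            jac p n A (res n z) i j := rfl
        rw [hj]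
        simp only [Mz, Jf, Matrix.fromBlocks, Matrix.one_apply, Pi.single_apply,
          Sum.inl.injEq, smul_eq_mul, Matrix.of_apply, Sum.elim_inl, Sum.elim_inr,
          Matrix.sub_apply, Matrix.smul_apply, res_apply]
        split <;> simp [*]
      · have := res_single_inr n t
        simp only [ContinuousLinearMap.sub_apply, ContinuousLinearMap.add_apply,
          ContinuousLinearMap.smul_apply, prj_apply,
          ContinuousLinearMap.comp_apply, L_apply, this]
        have hm : (Mz p n A z *ᵥ Pi.single (Sum.inr t) 1) (Sum.inl i) =
            Mz p n A z (Sum.inl i) (Sum.inr t) := by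
          rw [Matrix.mulVec_single]; exact mul_one _
        rw [hm]
        have ht : t = 0 := Subsingleton.elim _ _
        subst ht
        simp [Mz, Jf, Matrix.fromBlocks, Pi.single_apply]
    exact hCLM ▸ hder
  · have heq : (fun z : (Fin n ⊕ Fin 1) → ℝ => G p n A z (Sum.inr t)) =
        fun z => (∑ i, z (Sum.inl i)) - 1 :=
      funext fun z => G_apply_inr p n A z t
    rw [heq]
    have hder : HasFDerivAt (fun z : (Fin n ⊕ Fin 1) → ℝ => (∑ i, z (Sum.inl i)) - 1)
        (∑ i : Fin n, prj n (Sum.inl i)) z :=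
      (HasFDerivAt.fun_sum fun i _ => (prj n (Sum.inl i)).hasFDerivAt).sub_const 1
    have hCLM : (∑ i : Fin n, prj n (Sum.inl i)) =
        (prj n (Sum.inr t)).comp (L p n A z) := by
      apply clm_ext
      rintro (j | t')
      · simp only [ContinuousLinearMap.sum_apply, prj_apply,
          ContinuousLinearMap.comp_apply, L_apply]
        have hm : (Mz p n A z *ᵥ Pi.single (Sum.inl j) 1) (Sum.inr t) =
            Mz p n A z (Sum.inr t) (Sum.inl j) := by
          rw [Matrix.mulVec_single]; exact mul_one _
        rw [hm]
        simp [Mz, Jf, Matrix.fromBlocks, Pi.single_apply, Finset.sum_ite_eq]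
      · simp only [ContinuousLinearMap.sum_apply, prj_apply,
          ContinuousLinearMap.comp_apply, L_apply]
        have hm : (Mz p n A z *ᵥ Pi.single (Sum.inr t') 1) (Sum.inr t) =
            Mz p n A z (Sum.inr t) (Sum.inr t') := by
          rw [Matrix.mulVec_single]; exact mul_one _
        rw [hm]
        simp [Mz, Jf, Matrix.fromBlocks, Pi.single_apply]
    exact hCLM ▸ hder
  
lemma fderiv_G (z : (Fin n ⊕ Fin 1) → ℝ) :
    fderiv ℝ (G p n A) z = L p n A z := (hasFDerivAt_G p n A z).fderiv

lemma Mz_entry (z : (Fin n ⊕ Fin 1) → ℝ) (b b' : Fin n ⊕ Fin 1) :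
    Mz p n A z b b' = fderiv ℝ (G p n A) z (Pi.single b' 1) b := by
  rw [fderiv_G, L_apply, Matrix.mulVec_single]
  simp

lemma continuous_Mz : Continuous (Mz p n A) := by
  apply continuous_matrix
  intro b b'
  have h1 : Continuous (fun z => fderiv ℝ (G p n A) z) :=
    (contDiff_G p n A).continuous_fderiv (by simp)
  have h2 : Continuous fun z => fderiv ℝ (G p n A) z (Pi.single b' 1) :=
    h1.clm_apply continuous_const
  have h3 : Continuous fun z => fderiv ℝ (G p n A) z (Pi.single b' 1) b :=
    (continuous_apply b).comp h2
  simpa only [← Mz_entry p n A] using h3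

end Stmt14Aux

set_option maxHeartbeats 1000000 in
open Stmt14Aux in
/-- Local quadratic convergence of one step of the modified projected Newton iteration
(MPNI) to a nonnegative eigenpair `(x*, λ*)` of a nonnegative tensor, assuming
`Jf(x*, λ*)` is nonsingular. -/
theorem stmt_14 (m n : ℕ) (hm : 2 ≤ m)
    (A : Fin n → (Fin (m - 1) → Fin n) → ℝ) (hA : ∀ i j, 0 ≤ A i j)
    (xs : Fin n → ℝ) (lams : ℝ)
    (hroot1 : tmul (m - 1) n A xs = lams • xs) (hroot2 : ∑ i, xs i = 1)
    (hxs : ∀ i, 0 ≤ xs i) (hlams : 0 ≤ lams)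
    (hJ : (Jf (m - 1) n A xs lams).det ≠ 0) :
    ∃ δ > (0 : ℝ), ∃ c > (0 : ℝ),
      ∀ (x : Fin n → ℝ) (lam : ℝ),
        l1 (x - xs) + |lam - lams| < δ →
        ∑ i, x i = 1 →
        (∃ i, 0 < x i) →
        ∀ (xhat : Fin n → ℝ) (lamhat : ℝ),
          xhat = x - (fun i => ((Jf (m - 1) n A x lam)⁻¹ *ᵥ
              fval (m - 1) n A x lam) (Sum.inl i)) →
          lamhat = lam - ((Jf (m - 1) n A x lam)⁻¹ *ᵥ
              fval (m - 1) n A x lam) (Sum.inr 0) →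
          l1 ((l1 (fun i => max (xhat i) 0))⁻¹ • (fun i => max (xhat i) 0) - xs) +
              |max lamhat 0 - lams| ≤
            c * (l1 (x - xs) + |lam - lams|) ^ 2 := by
  classical
  set Gm := Stmt14Aux.G (m-1) n A with hGm
  set Mz := Stmt14Aux.Mz (m-1) n A with hMz
  set zs : (Fin n ⊕ Fin 1) → ℝ := Sum.elim xs fun _ => lams with hzs
  have hGzs : Gm zs = 0 := by
    funext b
    cases b with
    | inl i =>
      rw [hGm, Stmt14Aux.G_apply_inl]
      have h1 : Stmt14Aux.res n zs = xs := rfl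
      have h2 : zs (Sum.inr 0) = lams := rfl
      have h3 : zs (Sum.inl i) = xs i := rfl
      rw [h1, h2, h3, hroot1]
      simp
    | inr t =>
      rw [hGm, Stmt14Aux.G_apply_inr]
      have h3 : ∀ i, zs (Sum.inl i) = xs i := fun _ => rfl
      simp only [h3, hroot2, Pi.zero_apply, sub_self]
  have hMzs : Mz zs = Jf (m-1) n A xs lams := rfl
  have hdet_s : (Mz zs).det ≠ 0 := by rw [hMzs]; exact hJ
  -- continuity / inverse bound
  set g : ((Fin n ⊕ Fin 1) → ℝ) → Matrix (Fin n ⊕ Fin 1) (Fin n ⊕ Fin 1) ℝ :=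
    fun z => ((Mz z).det)⁻¹ • (Mz z).adjugate with hg
  have hginv : ∀ z, (Mz z)⁻¹ = g z := by
    intro z; rw [Matrix.inv_def, Ring.inverse_eq_inv']
  have hMc : Continuous Mz := Stmt14Aux.continuous_Mz (m-1) n A
  have hdetc : Continuous fun z => (Mz z).det := hMc.matrix_det
  have hadjc : Continuous fun z => (Mz z).adjugate := hMc.matrix_adjugate
  have hgc : ContinuousAt g zs :=
    ((hdetc.continuousAt.inv₀ hdet_s).smul hadjc.continuousAt)
  set K : ℝ := 1 + ∑ b, ∑ b', |g zs b b'| with hK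
  have hSnn : 0 ≤ ∑ b, ∑ b', |g zs b b'| :=
    Finset.sum_nonneg fun b _ => Finset.sum_nonneg fun b' _ => abs_nonneg _
  have hKpos : (0:ℝ) < K := by rw [hK]; linarith
  have hsumc : ContinuousAt (fun z => ∑ b, ∑ b', |g z b b'|) zs := by
    have houter : Continuous fun M : Matrix (Fin n ⊕ Fin 1) (Fin n ⊕ Fin 1) ℝ =>
        ∑ b, ∑ b', |M b b'| := by
      apply continuous_finset_sum; intro b _
      apply continuous_finset_sum; intro b' _
      exact ((continuous_apply b').comp (continuous_apply b)).abs
    exact houter.continuousAt.comp hgc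
  have hKev : ∀ᶠ z in nhds zs, (∑ b, ∑ b', |g z b b'|) < K :=
    hsumc.eventually_lt_const (by rw [hK]; linarith)
  have hdetev : ∀ᶠ z in nhds zs, (Mz z).det ≠ 0 :=
    hdetc.continuousAt.eventually_ne hdet_s
  obtain ⟨ρ, hρpos, hρ⟩ := Metric.eventually_nhds_iff.mp (hKev.and hdetev)
  -- smoothness constants
  have hGc : ContDiff ℝ ⊤ Gm := Stmt14Aux.contDiff_G (m-1) n A
  have hDF1 : ContDiff ℝ 1 (fderiv ℝ Gm) := hGc.fderiv_right le_top
  have hc2 : Continuous (fderiv ℝ (fderiv ℝ Gm)) := hDF1.continuous_fderiv one_ne_zero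
  obtain ⟨M2, hM2⟩ :=
    (isCompact_closedBall zs 1).exists_bound_of_continuousOn (f := fderiv ℝ (fderiv ℝ Gm))
      hc2.continuousOn
  have hM2nn : 0 ≤ M2 :=
    le_trans (norm_nonneg _) (hM2 zs (Metric.mem_closedBall_self zero_le_one))
  set C1 : ℝ := 2 * (n+1) * K * M2 with hC1
  have hC1nn : 0 ≤ C1 := by positivity
  refine ⟨min ρ (min 1 (1 / (2*(C1+1)))), lt_min hρpos (lt_min one_pos (by positivity)),
    2*C1+1, by linarith, ?_⟩
  intro x lam hd hsumx hposx xhat lamhat hxhat hlamhat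
  set z : (Fin n ⊕ Fin 1) → ℝ := Sum.elim x fun _ => lam with hzdef
  set d := l1 (x - xs) + |lam - lams| with hdd
  have hsplitd : ∀ (u : Fin n → ℝ) (r : ℝ),
      (∑ b : Fin n ⊕ Fin 1, |Sum.elim u (fun _ : Fin 1 => r) b|) = l1 u + |r| := by
    intro u r
    rw [Fintype.sum_sum_type]
    simp [l1]
  have hzx : ∀ i, z (Sum.inl i) = x i := fun _ => rfl
  have hzsx : ∀ i, zs (Sum.inl i) = xs i := fun _ => rfl
  have hzr : ∀ t, z (Sum.inr t) = lam := fun _ => rfl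
  have hzsr : ∀ t, zs (Sum.inr t) = lams := fun _ => rfl
  have hzmzs : z - zs = Sum.elim (x - xs) fun _ => lam - lams := by
    funext b
    cases b with
    | inl i => simp only [Pi.sub_apply, Sum.elim_inl, hzx, hzsx]
    | inr t => simp only [Pi.sub_apply, Sum.elim_inr, hzr, hzsr]
  have hdeq : (∑ b, |(z - zs) b|) = d := by rw [hzmzs, hsplitd]
  have hdnn : 0 ≤ d := by
    rw [← hdeq]; positivity
  have hnorm_le : ‖z - zs‖ ≤ d := by
    rw [← hdeq]
    refine (pi_norm_le_iff_of_nonneg (by positivity)).mpr fun b => ?_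
    rw [Real.norm_eq_abs]
    exact Finset.single_le_sum (f := fun b => |(z - zs) b|) (fun _ _ => abs_nonneg _)
      (Finset.mem_univ b)
  have hdρ : d < ρ := lt_of_lt_of_le hd (min_le_left _ _)
  have hd1 : d < 1 := lt_of_lt_of_le hd ((min_le_right _ _).trans (min_le_left _ _))
  have hdC : d < 1 / (2*(C1+1)) :=
    lt_of_lt_of_le hd ((min_le_right _ _).trans (min_le_right _ _))
  obtain ⟨hKz, hdetz⟩ := hρ (show dist z zs < ρ by
    rw [dist_eq_norm]; exact lt_of_le_of_lt hnorm_le hdρ)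
  have hxhat' : xhat = x - (fun i => ((Mz z)⁻¹ *ᵥ Gm z) (Sum.inl i)) := hxhat
  have hlamhat' : lamhat = lam - ((Mz z)⁻¹ *ᵥ Gm z) (Sum.inr 0) := hlamhat
  -- Newton identity
  set u : (Fin n ⊕ Fin 1) → ℝ := (Mz z) *ᵥ (z - zs) - Gm z with hudef
  set w : (Fin n ⊕ Fin 1) → ℝ := Sum.elim (xhat - xs) fun _ => lamhat - lams with hwdef
  have hwu : w = (Mz z)⁻¹ *ᵥ u := by
    have h1 : (Mz z)⁻¹ *ᵥ ((Mz z) *ᵥ (z - zs)) = z - zs := by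
      rw [Matrix.mulVec_mulVec, Matrix.nonsing_inv_mul _ (isUnit_iff_ne_zero.mpr hdetz),
        Matrix.one_mulVec]
    rw [hudef, Matrix.mulVec_sub, h1]
    funext b
    cases b with
    | inl i =>
      rw [hwdef]
      simp only [Sum.elim_inl, Pi.sub_apply, hxhat', hzx, hzsx]
      ring
    | inr t =>
      have ht : t = 0 := Subsingleton.elim _ _
      subst ht
      rw [hwdef]
      simp only [Sum.elim_inr, Pi.sub_apply, hlamhat', hzr, hzsr]
      ring
  -- Taylor estimate
  set d' := ‖z - zs‖ with hd'
  have hd'nn : 0 ≤ d' := norm_nonneg _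
  have hd'1 : d' ≤ 1 := le_trans hnorm_le hd1.le
  have hzball : z ∈ Metric.closedBall zs 1 := by
    rw [Metric.mem_closedBall, dist_eq_norm]; exact hnorm_le.trans hd1.le
  have hLip : ∀ y ∈ Metric.closedBall zs d',
      ‖fderiv ℝ Gm y - fderiv ℝ Gm z‖ ≤ 2*M2*d' := by
    intro y hy
    have hy1 : y ∈ Metric.closedBall zs 1 :=
      Metric.closedBall_subset_closedBall hd'1 hy
    have hlip := (convex_closedBall zs 1).norm_image_sub_le_of_norm_fderiv_le
      (fun v _ => (hDF1.differentiable one_ne_zero).differentiableAt) hM2 hzball hy1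
    have hyz : ‖y - z‖ ≤ 2 * d' := by
      have h1 : ‖y - zs‖ ≤ d' := by
        rw [← dist_eq_norm]; exact Metric.mem_closedBall.mp hy
      have h2 : ‖zs - z‖ = d' := by rw [norm_sub_rev]
      calc ‖y - z‖ = ‖(y - zs) + (zs - z)‖ := by abel_nf
        _ ≤ ‖y - zs‖ + ‖zs - z‖ := norm_add_le _ _
        _ ≤ 2 * d' := by rw [h2]; linarith
    calc ‖fderiv ℝ Gm y - fderiv ℝ Gm z‖ ≤ M2 * ‖y - z‖ := hlip
      _ ≤ M2 * (2*d') := mul_le_mul_of_nonneg_left hyz hM2nn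
      _ = 2*M2*d' := by ring
  have htay0 : ‖Gm z - Gm zs - (fderiv ℝ Gm z) (z - zs)‖ ≤ (2*M2*d') * ‖z - zs‖ :=
    (convex_closedBall zs d').norm_image_sub_le_of_norm_fderiv_le'
      (fun v _ => (hGc.differentiable (by simp)).differentiableAt) hLip
      (Metric.mem_closedBall_self hd'nn)
      (by rw [Metric.mem_closedBall, dist_eq_norm])
  have hDFz : (fderiv ℝ Gm z) (z - zs) = Mz z *ᵥ (z - zs) := by
    rw [hGm, Stmt14Aux.fderiv_G, Stmt14Aux.L_apply]
  have hunorm : ‖u‖ ≤ 2*M2*d'^2 := by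
    have heq2 : ‖u‖ = ‖Gm z - Gm zs - (fderiv ℝ Gm z) (z - zs)‖ := by
      rw [hGzs, hDFz, hudef]
      rw [show Gm z - 0 - Mz z *ᵥ (z - zs) = -(Mz z *ᵥ (z - zs) - Gm z) by abel]
      rw [norm_neg]
    rw [heq2]
    calc ‖Gm z - Gm zs - (fderiv ℝ Gm z) (z - zs)‖ ≤ (2*M2*d') * ‖z - zs‖ := htay0
      _ = 2*M2*d'^2 := by rw [← hd']; ring
  -- entrywise bound via the inverse matrix
  have hub : ∀ b, |w b| ≤ K * (2*M2*d'^2) := by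
    intro b
    rw [hwu, hginv]
    have hwb : (g z *ᵥ u) b = ∑ b', g z b b' * u b' := rfl
    rw [hwb]
    calc |∑ b', g z b b' * u b'| ≤ ∑ b', |g z b b' * u b'| :=
          Finset.abs_sum_le_sum_abs _ _
      _ = ∑ b', |g z b b'| * |u b'| := by simp [abs_mul]
      _ ≤ ∑ b', |g z b b'| * (2*M2*d'^2) := by
          refine Finset.sum_le_sum fun b' _ => ?_
          refine mul_le_mul_of_nonneg_left ?_ (abs_nonneg _)
          exact le_trans (by rw [← Real.norm_eq_abs]; exact norm_le_pi_norm u b') hunorm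
      _ = (∑ b', |g z b b'|) * (2*M2*d'^2) := by rw [← Finset.sum_mul]
      _ ≤ K * (2*M2*d'^2) := by
          refine mul_le_mul_of_nonneg_right ?_ (by positivity)
          refine le_trans ?_ hKz.le
          exact Finset.single_le_sum (f := fun b => ∑ b', |g z b b'|)
            (fun _ _ => Finset.sum_nonneg fun _ _ => abs_nonneg _) (Finset.mem_univ b)
  have hsumw : (∑ b, |w b|) ≤ C1 * d^2 := by
    calc (∑ b, |w b|) ≤ ∑ _b : Fin n ⊕ Fin 1, K * (2*M2*d'^2) :=
          Finset.sum_le_sum fun b _ => hub b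
      _ = ((n:ℝ)+1) * (K*(2*M2*d'^2)) := by
          rw [Finset.sum_const, Finset.card_univ, Fintype.card_sum, Fintype.card_fin,
            Fintype.card_fin, nsmul_eq_mul]
          push_cast
          ring
      _ = C1 * d'^2 := by rw [hC1]; ring
      _ ≤ C1 * d^2 := mul_le_mul_of_nonneg_left (pow_le_pow_left₀ hd'nn hnorm_le 2) hC1nn
  have hwsplit : (∑ b, |w b|) = l1 (xhat - xs) + |lamhat - lams| := by
    rw [hwdef, hsplitd]
  have hsum2 : l1 (xhat - xs) + |lamhat - lams| ≤ C1 * d^2 := by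
    rw [← hwsplit]; exact hsumw
  have ha : l1 (xhat - xs) ≤ C1 * d^2 := by
    have := abs_nonneg (lamhat - lams); linarith
  have hhalf : C1 * d^2 ≤ 1/2 := by
    have h2p : (0:ℝ) < 2*(C1+1) := by linarith
    have hkey : d * (2*(C1+1)) < 1 := (lt_div_iff₀ h2p).mp hdC
    have hq : (C1*d)*d ≤ (C1*d)*1 :=
      mul_le_mul_of_nonneg_left hd1.le (mul_nonneg hC1nn hdnn)
    have hc1d : C1 * d < 1/2 := by nlinarith [hdnn]
    calc C1 * d^2 = C1 * d * d := by ring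
      _ ≤ C1 * d * 1 := hq
      _ = C1 * d := by ring
      _ ≤ 1/2 := hc1d.le
  -- projection step
  set yplus : Fin n → ℝ := fun i => max (xhat i) 0 with hyp
  have he : l1 (yplus - xs) ≤ l1 (xhat - xs) := by
    refine Finset.sum_le_sum fun i _ => ?_
    simp only [Pi.sub_apply, hyp]
    calc |max (xhat i) 0 - xs i| = |max (xhat i) 0 - max (xs i) 0| := by
          rw [max_eq_left (hxs i)]
      _ ≤ |xhat i - xs i| := abs_max_sub_max_le_abs _ _ _
  have hl1xs : l1 xs = 1 := by
    rw [l1, ← hroot2]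
    exact Finset.sum_congr rfl fun i _ => abs_of_nonneg (hxs i)
  have hs1 : |l1 yplus - 1| ≤ l1 (yplus - xs) := by
    have h0 : |l1 yplus - 1| = |∑ i, (|yplus i| - |xs i|)| := by
      rw [Finset.sum_sub_distrib, ← hl1xs]
      rfl
    rw [h0]
    calc |∑ i, (|yplus i| - |xs i|)| ≤ ∑ i, |(|yplus i| - |xs i|)| :=
          Finset.abs_sum_le_sum_abs _ _
      _ ≤ ∑ i, |yplus i - xs i| :=
          Finset.sum_le_sum fun i _ => abs_abs_sub_abs_le_abs_sub _ _
      _ = l1 (yplus - xs) := rfl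
  have hehalf : l1 (yplus - xs) ≤ 1/2 := le_trans he (le_trans ha hhalf)
  have hspos : 0 < l1 yplus := by
    have h4 := (abs_le.mp (hs1.trans hehalf)).1
    linarith
  have hproj : l1 ((l1 yplus)⁻¹ • yplus - xs) ≤ 2 * l1 (yplus - xs) := by
    have hsplit2 : (l1 yplus)⁻¹ • yplus - xs = ((l1 yplus)⁻¹ - 1) • yplus + (yplus - xs) := by
      funext i
      simp only [Pi.add_apply, Pi.sub_apply, Pi.smul_apply, smul_eq_mul]
      ring
    rw [hsplit2]
    have htri : l1 (((l1 yplus)⁻¹ - 1) • yplus + (yplus - xs)) ≤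
        l1 (((l1 yplus)⁻¹ - 1) • yplus) + l1 (yplus - xs) := by
      calc l1 (((l1 yplus)⁻¹ - 1) • yplus + (yplus - xs)) ≤
          ∑ i, (|(((l1 yplus)⁻¹ - 1) • yplus) i| + |(yplus - xs) i|) :=
            Finset.sum_le_sum fun i _ => abs_add_le _ _
        _ = l1 (((l1 yplus)⁻¹ - 1) • yplus) + l1 (yplus - xs) := Finset.sum_add_distrib
    have hhom : l1 (((l1 yplus)⁻¹ - 1) • yplus) = |(l1 yplus)⁻¹ - 1| * l1 yplus := by
      rw [l1]
      simp only [Pi.smul_apply, smul_eq_mul, abs_mul]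
      rw [← Finset.mul_sum]
      rfl
    have hs2 : |(l1 yplus)⁻¹ - 1| * l1 yplus = |1 - l1 yplus| := by
      have hmm : ((l1 yplus)⁻¹ - 1) * l1 yplus = 1 - l1 yplus := by
        rw [sub_mul, inv_mul_cancel₀ hspos.ne', one_mul]
      calc |(l1 yplus)⁻¹ - 1| * l1 yplus = |(l1 yplus)⁻¹ - 1| * |l1 yplus| := by
            rw [abs_of_pos hspos]
        _ = |((l1 yplus)⁻¹ - 1) * l1 yplus| := (abs_mul _ _).symm
        _ = |1 - l1 yplus| := by rw [hmm]
    have hs3 : |1 - l1 yplus| ≤ l1 (yplus - xs) := by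
      rw [abs_sub_comm]; exact hs1
    calc l1 (((l1 yplus)⁻¹ - 1) • yplus + (yplus - xs)) ≤
        l1 (((l1 yplus)⁻¹ - 1) • yplus) + l1 (yplus - xs) := htri
      _ = |1 - l1 yplus| + l1 (yplus - xs) := by rw [hhom, hs2]
      _ ≤ 2 * l1 (yplus - xs) := by linarith
  have hlam2 : |max lamhat 0 - lams| ≤ |lamhat - lams| := by
    calc |max lamhat 0 - lams| = |max lamhat 0 - max lams 0| := by
          rw [max_eq_left hlams]
      _ ≤ |lamhat - lams| := abs_max_sub_max_le_abs _ _ _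
  have hdsq : 0 ≤ d^2 := sq_nonneg d
  calc l1 ((l1 yplus)⁻¹ • yplus - xs) + |max lamhat 0 - lams| ≤
      2 * l1 (yplus - xs) + |lamhat - lams| := add_le_add hproj hlam2
    _ ≤ 2 * l1 (xhat - xs) + |lamhat - lams| := by linarith [he]
    _ ≤ 2 * (l1 (xhat - xs) + |lamhat - lams|) := by
        linarith [abs_nonneg (lamhat - lams)]
    _ ≤ 2 * (C1 * d^2) := by linarith [hsum2]
    _ ≤ (2*C1+1) * d^2 := by linarith [hdsq]
end
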